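/- Uniqueness Lemma: every positive persistent De Morgan function of arity n is uniquely determined by the values it takes on B2^n; that is, if f and g are n-ary De Morgan functions, both monotone with respect to the componentwise truth order and both monotone with respect to the componentwise information order, and f and g agree on all tuples from {t, f}, then f = g. -/
import Mathlib


set_option autoImplicit false

/-- The four truth values of the Belnap–Dunn logic. -/
inductive DM4 : Type
  | t
  | f
  | n
  | b
deriving DecidableEq

namespace DM4

/-- De Morgan negation. -/
def neg : DM4 → DM4
  | t => f
  | f => t
  | n => n
  | b => b

/-- Conflation. -/
def conf : DM4 → DM4
  | t => t
  | f => f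
  | n => b
  | b => n

/-- Meet in the truth order. -/
def meet : DM4 → DM4 → DM4
  | f, _ => f
  | _, f => f
  | t, y => y
  | x, t => x
  | n, n => n
  | b, b => b
  | n, b => f
  | b, n => f

/-- Join in the truth order. -/
def join : DM4 → DM4 → DM4
  | t, _ => t
  | _, t => t
  | f, y => y
  | x, f => x
  | n, n => n
  | b, b => b
  | n, b => t
  | b, n => t

/-- Meet in the information order (⊗). -/
def imeet : DM4 → DM4 → DM4
  | n, _ => n
  | _, n => n
  | b, y => y
  | x, b => x
  | t, t => t
  | f, f => f
  | t, f => n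
  | f, t => n

/-- Join in the information order (⊕). -/
def ijoin : DM4 → DM4 → DM4
  | b, _ => b
  | _, b => b
  | n, y => y
  | x, n => x
  | t, t => t
  | f, f => f
  | t, f => b
  | f, t => b

/-- The truth order: least element `f`, greatest element `t`, with `n`, `b` incomparable. -/
def tle (x y : DM4) : Prop := x = y ∨ x = f ∨ y = t

/-- The information order: least element `n`, greatest element `b`, with `t`, `f` incomparable. -/
def ile (x y : DM4) : Prop := x = y ∨ x = n ∨ y = b

/-- □: maps t to t and everything else to f. -/
def box : DM4 → DM4
  | t => t
  | _ => f

/-- ◇: maps f to f and everything else to t. -/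
def diamond : DM4 → DM4
  | f => f
  | _ => t

/-- Δ: maps t, b to t and n, f to f. -/
def delta : DM4 → DM4
  | t => t
  | b => t
  | _ => f

/-- ∇: maps t, n to t and b, f to f. -/
def nabla : DM4 → DM4
  | t => t
  | n => t
  | _ => f

/-- id_{b↦n}: maps b to n and fixes t, f, n. -/
def idbn : DM4 → DM4
  | b => n
  | x => x

/-- id_{n↦b}: maps n to b and fixes t, f, b. -/
def idnb : DM4 → DM4
  | n => b
  | x => x

/-- id_{n↦t}: maps n to t and fixes t, f, b. -/
def idnt : DM4 → DM4
  | n => t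
  | x => x

/-- id_{b↦t}: maps b to t and fixes t, f, n. -/
def idbt : DM4 → DM4
  | b => t
  | x => x

/-- t_{n↦n}: maps n to n and everything else to t. -/
def tnn : DM4 → DM4
  | n => n
  | _ => t

/-- t_{b↦b}: maps b to b and everything else to t. -/
def tbb : DM4 → DM4
  | b => b
  | _ => t

/-- The binary function pbp²₁. -/
def pbp1 : DM4 → DM4 → DM4
  | t, t => t | t, f => f | t, n => f | t, b => b
  | f, t => t | f, f => f | f, n => f | f, b => b
  | n, t => t | n, f => f | n, n => n | n, b => b
  | b, t => b | b, f => f | b, n => f | b, b => b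

/-- The binary function pbp²₂. -/
def pbp2 : DM4 → DM4 → DM4
  | t, t => t | t, f => f | t, n => n | t, b => f
  | f, t => t | f, f => f | f, n => n | f, b => f
  | n, t => n | n, f => f | n, n => n | n, b => f
  | b, t => t | b, f => f | b, n => n | b, b => b

/-- The binary function mnh²₁. -/
def mnh1 : DM4 → DM4 → DM4
  | t, t => f | t, f => f | t, n => n | t, b => b
  | f, t => f | f, f => f | f, n => n | f, b => b
  | n, t => f | n, f => f | n, n => n | n, b => f
  | b, t => f | b, f => f | b, n => n | b, b => b

/-- The binary function mnh²₂. -/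
def mnh2 : DM4 → DM4 → DM4
  | t, t => f | t, f => f | t, n => n | t, b => b
  | f, t => f | f, f => f | f, n => n | f, b => b
  | n, t => f | n, f => f | n, n => n | n, b => b
  | b, t => f | b, f => f | b, n => f | b, b => b

/-- The binary function mhnp². -/
def mhnp2 : DM4 → DM4 → DM4
  | t, _ => t
  | f, _ => t
  | n, b => f
  | n, _ => n
  | b, n => f
  | b, _ => b

/-- The binary function mnp²₁. -/
def mnp1 : DM4 → DM4 → DM4
  | t, b => b
  | t, _ => t
  | f, b => b
  | f, _ => t
  | n, b => f
  | n, _ => n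
  | b, n => f
  | b, _ => b

/-- The binary function mnp²₂. -/
def mnp2 : DM4 → DM4 → DM4
  | t, _ => t
  | f, _ => t
  | n, _ => n
  | b, n => f
  | b, _ => b

/-- The binary function mnp²₃. -/
def mnp3 : DM4 → DM4 → DM4
  | t, n => n
  | t, _ => t
  | f, n => n
  | f, _ => t
  | n, b => f
  | n, _ => n
  | b, n => f
  | b, _ => b

/-- The binary function mnp²₄. -/
def mnp4 : DM4 → DM4 → DM4
  | t, _ => t
  | f, _ => t
  | n, b => f
  | n, _ => n
  | b, _ => b

/-- The ternary function mhnp³. -/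
def mhnp3 : DM4 → DM4 → DM4 → DM4
  | _, t, _ => f
  | _, f, _ => f
  | t, n, _ => n
  | f, n, _ => f
  | b, n, _ => f
  | n, n, b => f
  | n, n, _ => n
  | t, b, _ => b
  | f, b, _ => f
  | n, b, _ => f
  | b, b, n => f
  | b, b, _ => b

/-- The set of designated values. -/
def Des : Set DM4 := {t, b}

/-- Designatedness as a Boolean predicate. -/
def des : DM4 → Bool
  | t => true
  | b => true
  | _ => false

/-- The protoimplication →_{t-max}. -/
def tmax (x y : DM4) : DM4 :=
  match des x, des y with
  | true, false => n
  | _, _ => t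

/-- The protoimplication →_{i-max}. -/
def imax (x y : DM4) : DM4 :=
  match des x, des y with
  | true, false => f
  | _, _ => b

/-- The protoimplication ↔_{t-min}. -/
def tmin (x y : DM4) : DM4 := if x = y then b else f

/-- The protoimplication ↔_{i-min}. -/
def imin (x y : DM4) : DM4 := if x = y then t else n

/-- A binary operation is a protoimplication if it satisfies Reflexivity and Modus Ponens
with respect to the designated set {t, b}. -/
def IsProtoimplication (r : DM4 → DM4 → DM4) : Prop :=
  (∀ a : DM4, r a a ∈ Des) ∧ ∀ a c : DM4, a ∈ Des → r a c ∈ Des → c ∈ Des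

/-- `DMFun k` is the type of De Morgan functions of arity `k + 1` (arities are positive). -/
abbrev DMFun (k : ℕ) : Type := (Fin (k + 1) → DM4) → DM4

/-- Membership in the clone generated by the family of operations `S`
(`S k` is the set of generators of arity `k + 1`). -/
inductive InClone (S : ∀ k : ℕ, Set (DMFun k)) : ∀ k : ℕ, DMFun k → Prop
  | base {k : ℕ} {g : DMFun k} : g ∈ S k → InClone S k g
  | proj {k : ℕ} (i : Fin (k + 1)) : InClone S k (fun x => x i)
  | comp {k m : ℕ} {g : DMFun m} {h : Fin (m + 1) → DMFun k} :
      InClone S m g → (∀ i, InClone S k (h i)) →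
      InClone S k (fun x => g (fun i => h i x))

/-- A family of sets of De Morgan functions is a clone if it contains all projections
and is closed under composition. -/
structure IsClone (C : ∀ k : ℕ, Set (DMFun k)) : Prop where
  proj : ∀ (k : ℕ) (i : Fin (k + 1)), (fun x => x i) ∈ C k
  comp : ∀ (k m : ℕ) (g : DMFun m) (h : Fin (m + 1) → DMFun k),
      g ∈ C m → (∀ i, h i ∈ C k) → (fun x => g (fun i => h i x)) ∈ C k

/-- The generating family consisting of a single unary operation. -/
def op1 (g : DM4 → DM4) : ∀ k : ℕ, Set (DMFun k)
  | 0 => {fun x => g (x 0)}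
  | _ + 1 => ∅

/-- The generating family consisting of a single binary operation. -/
def op2 (g : DM4 → DM4 → DM4) : ∀ k : ℕ, Set (DMFun k)
  | 1 => {fun x => g (x 0) (x 1)}
  | _ => ∅

/-- The generating family consisting of a single ternary operation. -/
def op3 (g : DM4 → DM4 → DM4 → DM4) : ∀ k : ℕ, Set (DMFun k)
  | 2 => {fun x => g (x 0) (x 1) (x 2)}
  | _ => ∅

/-- Union of two families of operations. -/
def funion (S T : ∀ k : ℕ, Set (DMFun k)) : ∀ k : ℕ, Set (DMFun k) := fun k => S k ∪ T k

infixr:65 " ⊹ " => funion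

/-- The generators of DLat: ∧, ∨, t, f (constants as unary constant functions). -/
def DLatGen : ∀ k : ℕ, Set (DMFun k) :=
  op2 meet ⊹ op2 join ⊹ op1 (fun _ => t) ⊹ op1 (fun _ => f)

/-- The generators of DMA: ∧, ∨, t, f, −. -/
def DMAGen : ∀ k : ℕ, Set (DMFun k) := DLatGen ⊹ op1 neg

/-- The generators of BiLat: ∧, ∨, t, f, ⊗, ⊕, n, b. -/
def BiLatGen : ∀ k : ℕ, Set (DMFun k) :=
  DLatGen ⊹ op2 imeet ⊹ op2 ijoin ⊹ op1 (fun _ => n) ⊹ op1 (fun _ => b)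

/-- A De Morgan function is harmonious if it commutes with conflation. -/
def Harmonious {k : ℕ} (g : DMFun k) : Prop :=
  ∀ x : Fin (k + 1) → DM4, g (fun i => conf (x i)) = conf (g x)

/-- A De Morgan function is positive if it is monotone in the componentwise truth order. -/
def Positive {k : ℕ} (g : DMFun k) : Prop :=
  ∀ x y : Fin (k + 1) → DM4, (∀ i, tle (x i) (y i)) → tle (g x) (g y)

/-- A De Morgan function is persistent if it is monotone in the componentwise
information order. -/
def Persistent {k : ℕ} (g : DMFun k) : Prop :=
  ∀ x y : Fin (k + 1) → DM4, (∀ i, ile (x i) (y i)) → ile (g x) (g y)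

/-- A De Morgan function preserves a subset X of DM4 if it maps tuples from X into X. -/
def Preserves {k : ℕ} (g : DMFun k) (X : Set DM4) : Prop :=
  ∀ x : Fin (k + 1) → DM4, (∀ i, x i ∈ X) → g x ∈ X

def B2 : Set DM4 := {t, f}
def K3 : Set DM4 := {t, n, f}
def P3 : Set DM4 := {t, b, f}

/-- A unary operation as a De Morgan function. -/
def toF1 (g : DM4 → DM4) : DMFun 0 := fun x => g (x 0)

/-- A binary operation as a De Morgan function. -/
def toF2 (g : DM4 → DM4 → DM4) : DMFun 1 := fun x => g (x 0) (x 1)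

/-- A ternary operation as a De Morgan function. -/
def toF3 (g : DM4 → DM4 → DM4 → DM4) : DMFun 2 := fun x => g (x 0) (x 1) (x 2)

/-- The clone generated by a family of operations, as a family of sets. -/
def CloneOf (S : ∀ k : ℕ, Set (DMFun k)) : ∀ k : ℕ, Set (DMFun k) :=
  fun k => {g | InClone S k g}

/-- Inclusion of families of operations. -/
def CloneLE (C D : ∀ k : ℕ, Set (DMFun k)) : Prop := ∀ k : ℕ, C k ⊆ D k


instance : Fintype DM4 :=
  ⟨⟨{t, f, n, b}, by decide⟩, fun x => by cases x <;> decide⟩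

instance : ∀ x y : DM4, Decidable (tle x y) := fun x y =>
  inferInstanceAs (Decidable (_ ∨ _))

instance : ∀ x y : DM4, Decidable (ile x y) := fun x y =>
  inferInstanceAs (Decidable (_ ∨ _))

lemma key_b : ∀ u v w w' : DM4, tle v w → tle w u → ile u w → ile v w →
    tle v w' → tle w' u → ile u w' → ile v w' → w = w' := by decide

lemma key_n : ∀ u v w w' : DM4, tle v w → tle w u → ile w u → ile w v →
    tle v w' → tle w' u → ile w' u → ile w' v → w = w' := by decide

/-- Uniqueness Lemma. A positive persistent De Morgan function is
uniquely determined by its values on Boolean tuples. -/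
theorem uniqueness_lemma (k : ℕ) (g h : DMFun k)
    (hgpos : Positive g) (hgper : Persistent g)
    (hhpos : Positive h) (hhper : Persistent h)
    (agree : ∀ x : Fin (k + 1) → DM4, (∀ i, x i ∈ B2) → g x = h x) :
    g = h := by
  funext x
  suffices H : ∀ m (x : Fin (k + 1) → DM4),
      (Finset.univ.filter (fun j => x j ≠ t ∧ x j ≠ f)).card = m → g x = h x from
    H _ x rfl
  intro m
  induction m using Nat.strong_induction_on with
  | _ m IH =>
    intro x hm
    by_cases hB : ∀ i, x i ∈ B2
    · exact agree x hB
    · push_neg at hB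
      obtain ⟨i, hi⟩ := hB
      have hi' : x i ≠ t ∧ x i ≠ f := by
        simp only [B2, Set.mem_insert_iff, Set.mem_singleton_iff, not_or] at hi
        exact hi
      have himem : i ∈ Finset.univ.filter (fun j => x j ≠ t ∧ x j ≠ f) := by
        simp [hi'.1, hi'.2]
      have upd_card : ∀ c : DM4, c = t ∨ c = f →
          (Finset.univ.filter (fun j => Function.update x i c j ≠ t ∧
            Function.update x i c j ≠ f)).card < m := by
        intro c hc
        have heq : Finset.univ.filter (fun j => Function.update x i c j ≠ t ∧
            Function.update x i c j ≠ f) =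
            (Finset.univ.filter (fun j => x j ≠ t ∧ x j ≠ f)).erase i := by
          ext j
          by_cases hj : j = i
          · subst hj; rcases hc with hc | hc <;> simp [Function.update, hc]
          · simp [Function.update, hj]
        rw [heq, ← hm]
        exact Finset.card_erase_lt_of_mem himem
      set xt := Function.update x i t with hxt
      set xf := Function.update x i f with hxf
      have gte : g xt = h xt := IH _ (upd_card t (Or.inl rfl)) _ rfl
      have gfe : g xf = h xf := IH _ (upd_card f (Or.inr rfl)) _ rfl
      have c1 : ∀ j, tle (xf j) (x j) := by
        intro j
        by_cases hj : j = i
        · subst hj; simp only [hxf, Function.update_self]; exact Or.inr (Or.inl rfl)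
        · simp only [hxf, Function.update_of_ne hj]; exact Or.inl rfl
      have c2 : ∀ j, tle (x j) (xt j) := by
        intro j
        by_cases hj : j = i
        · subst hj; simp only [hxt, Function.update_self]; exact Or.inr (Or.inr rfl)
        · simp only [hxt, Function.update_of_ne hj]; exact Or.inl rfl
      have hxi : x i = n ∨ x i = b := by
        rcases hv : x i with _ | _ | _ | _
        · exact absurd hv hi'.1
        · exact absurd hv hi'.2
        · exact Or.inl rfl
        · exact Or.inr rfl
      rcases hxi with hxi | hxi
      · -- x i = n : n ⊑ t and n ⊑ f
        have c3 : ∀ j, ile (x j) (xt j) := by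
          intro j
          by_cases hj : j = i
          · subst hj; simp only [hxt, Function.update_self, hxi]; exact Or.inr (Or.inl rfl)
          · simp only [hxt, Function.update_of_ne hj]; exact Or.inl rfl
        have c4 : ∀ j, ile (x j) (xf j) := by
          intro j
          by_cases hj : j = i
          · subst hj; simp only [hxf, Function.update_self, hxi]; exact Or.inr (Or.inl rfl)
          · simp only [hxf, Function.update_of_ne hj]; exact Or.inl rfl
        refine key_n (g xt) (g xf) (g x) (h x)
          (hgpos _ _ c1) (hgpos _ _ c2) (hgper _ _ c3) (hgper _ _ c4)
          ?_ ?_ ?_ ?_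
        · rw [gfe]; exact hhpos _ _ c1
        · rw [gte]; exact hhpos _ _ c2
        · rw [gte]; exact hhper _ _ c3
        · rw [gfe]; exact hhper _ _ c4
      · -- x i = b : t ⊑ b and f ⊑ b
        have c3 : ∀ j, ile (xt j) (x j) := by
          intro j
          by_cases hj : j = i
          · subst hj; simp only [hxt, Function.update_self, hxi]; exact Or.inr (Or.inr rfl)
          · simp only [hxt, Function.update_of_ne hj]; exact Or.inl rfl
        have c4 : ∀ j, ile (xf j) (x j) := by
          intro j
          by_cases hj : j = i
          · subst hj; simp only [hxf, Function.update_self, hxi]; exact Or.inr (Or.inr rfl)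
          · simp only [hxf, Function.update_of_ne hj]; exact Or.inl rfl
        refine key_b (g xt) (g xf) (g x) (h x)
          (hgpos _ _ c1) (hgpos _ _ c2) (hgper _ _ c3) (hgper _ _ c4)
          ?_ ?_ ?_ ?_
        · rw [gfe]; exact hhpos _ _ c1
        · rw [gte]; exact hhpos _ _ c2
        · rw [gte]; exact hhper _ _ c3
        · rw [gfe]; exact hhper _ _ c4

end DM4
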